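/- arXiv:2507.00148 — 4 statements merged into one kernel-verified Lean document; each statement's English description precedes it below -/
import Mathlib

section
/- Let f : {0,1}^n → {0,1} be a non-constant Boolean function, let k1 be the size of a largest prime implicant of f and k2 the size of a largest prime implicate of f. Then max{k1, k2} ≤ s_u(f) ≤ bs_u(f) ≤ cc_u(f) ≤ k1 + k2 − 1. -/
attribute [local instance 0] Classical.propDecidable

/-- Ternary values: `none` represents the uncertain value `u`,
`some b` represents the Boolean value `b`. -/
abbrev TVal := Option Bool

/-- The resolutions of `x ∈ {0,u,1}^ι`: all Boolean strings agreeing with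
the determined coordinates of `x`. -/
def Res {ι : Type} (x : ι → Option Bool) : Set (ι → Bool) :=
  {y | ∀ i b, x i = some b → y i = b}

/-- The hazard-free extension of a Boolean function `f`. -/
noncomputable def hfext {ι : Type} (f : (ι → Bool) → Bool) (x : ι → Option Bool) :
    Option Bool :=
  if ∀ y ∈ Res x, f y = true then some true
  else if ∀ y ∈ Res x, f y = false then some false
  else none

/-- Number of uncertain (`u`) coordinates of `x`. -/
noncomputable def uCount {ι : Type} [Fintype ι] (x : ι → Option Bool) : ℕ :=
  (Finset.univ.filter fun i : ι => x i = none).card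

/-- u-sensitivity of `f` at `x`: the number of coordinates `i` such that
changing only coordinate `i` can change the value of the hazard-free extension. -/
noncomputable def sensAt {ι : Type} [Fintype ι] (f : (ι → Bool) → Bool)
    (x : ι → Option Bool) : ℕ :=
  (Finset.univ.filter fun i : ι => ∃ y : ι → Option Bool,
      y i ≠ x i ∧ (∀ j, j ≠ i → y j = x j) ∧ hfext f y ≠ hfext f x).card

/-- u-sensitivity of `f`. -/
noncomputable def sensU {ι : Type} [Fintype ι] [DecidableEq ι]
    (f : (ι → Bool) → Bool) : ℕ :=
  Finset.univ.sup fun x : ι → Option Bool => sensAt f x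

/-- u-sensitivity of `f` restricted to inputs whose hazard-free value is `b`. -/
noncomputable def sensULevel {ι : Type} [Fintype ι] [DecidableEq ι]
    (f : (ι → Bool) → Bool) (b : Option Bool) : ℕ :=
  (Finset.univ.filter fun x : ι → Option Bool => hfext f x = b).sup (sensAt f)

/-- Boolean sensitivity of `f` at a Boolean input `x`. -/
noncomputable def boolSensAt {ι : Type} [Fintype ι] [DecidableEq ι]
    (f : (ι → Bool) → Bool) (x : ι → Bool) : ℕ :=
  (Finset.univ.filter fun i : ι => f (Function.update x i (!x i)) ≠ f x).card

/-- Boolean sensitivity of `f`. -/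
noncomputable def boolSens {ι : Type} [Fintype ι] [DecidableEq ι]
    (f : (ι → Bool) → Bool) : ℕ :=
  Finset.univ.sup (boolSensAt f)

/-- There are `k` pairwise disjoint blocks, each of which is sensitive for the
hazard-free extension of `f` at `x`. -/
def HasSensBlocks {ι : Type} (f : (ι → Bool) → Bool) (x : ι → Option Bool)
    (k : ℕ) : Prop :=
  ∃ (B : Fin k → Set ι) (y : Fin k → ι → Option Bool),
    (∀ j j', j ≠ j' → Disjoint (B j) (B j')) ∧
    ∀ j, (∀ i, y j i ≠ x i ↔ i ∈ B j) ∧ hfext f (y j) ≠ hfext f x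

/-- u-block sensitivity of `f`. -/
noncomputable def bsU {ι : Type} (f : (ι → Bool) → Bool) : ℕ :=
  sSup {k | ∃ x, HasSensBlocks f x k}

/-- A ternary string `y` is consistent with a partial assignment
`p : ι → Option (Option Bool)` (`none` = `*`). -/
def Consistent {ι : Type} (y : ι → Option Bool) (p : ι → Option (Option Bool)) :
    Prop :=
  ∀ i v, p i = some v → y i = v

/-- `p` is a certificate for the hazard-free extension of `f` at `x`. -/
def IsCert {ι : Type} (f : (ι → Bool) → Bool) (x : ι → Option Bool)
    (p : ι → Option (Option Bool)) : Prop :=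
  Consistent x p ∧ ∀ y, Consistent y p → hfext f y = hfext f x

/-- Size of a partial assignment: the number of non-`*` coordinates. -/
noncomputable def certSize {ι : Type} [Fintype ι] (p : ι → Option (Option Bool)) :
    ℕ :=
  (Finset.univ.filter fun i : ι => p i ≠ none).card

/-- u-certificate complexity of `f` at `x`. -/
noncomputable def ccAt {ι : Type} [Fintype ι] (f : (ι → Bool) → Bool)
    (x : ι → Option Bool) : ℕ :=
  sInf {k | ∃ p, IsCert f x p ∧ certSize p = k}

/-- u-certificate complexity of `f`. -/
noncomputable def ccU {ι : Type} [Fintype ι] [DecidableEq ι]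
    (f : (ι → Bool) → Bool) : ℕ :=
  Finset.univ.sup fun x : ι → Option Bool => ccAt f x

/-- u-certificate complexity of `f` restricted to inputs with hazard-free value `b`. -/
noncomputable def ccULevel {ι : Type} [Fintype ι] [DecidableEq ι]
    (f : (ι → Bool) → Bool) (b : Option Bool) : ℕ :=
  (Finset.univ.filter fun x : ι → Option Bool => hfext f x = b).sup (ccAt f)

/-- A set of literals (at most one per variable), encoded as a partial Boolean
assignment `q : ι → Option Bool`, is an implicant of `f` if `f` is `true` on
every Boolean input extending `q`. -/
def IsImplicant {ι : Type} (f : (ι → Bool) → Bool) (q : ι → Option Bool) : Prop :=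
  ∀ y : ι → Bool, (∀ i b, q i = some b → y i = b) → f y = true

/-- Dually, an implicate of `f` forces the value `false`. -/
def IsImplicate {ι : Type} (f : (ι → Bool) → Bool) (q : ι → Option Bool) : Prop :=
  ∀ y : ι → Bool, (∀ i b, q i = some b → y i = b) → f y = false

/-- `q'` is a (literal-)subset of `q`. -/
def SubAsn {ι : Type} (q' q : ι → Option Bool) : Prop :=
  ∀ i b, q' i = some b → q i = some b

def IsPrimeImplicant {ι : Type} (f : (ι → Bool) → Bool) (q : ι → Option Bool) :
    Prop :=
  IsImplicant f q ∧ ∀ q', SubAsn q' q → q' ≠ q → ¬ IsImplicant f q'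

def IsPrimeImplicate {ι : Type} (f : (ι → Bool) → Bool) (q : ι → Option Bool) :
    Prop :=
  IsImplicate f q ∧ ∀ q', SubAsn q' q → q' ≠ q → ¬ IsImplicate f q'

/-- Number of literals of a partial assignment. -/
noncomputable def asnSize {ι : Type} [Fintype ι] (q : ι → Option Bool) : ℕ :=
  (Finset.univ.filter fun i : ι => q i ≠ none).card

/-- Ternary decision trees: internal nodes query a variable and branch on the
three possible values `0`, `u`, `1`; leaves output a value in `{0,u,1}`. -/
inductive TTree (ι : Type) : Type where
  | leaf : Option Bool → TTree ι
  | node : ι → TTree ι → TTree ι → TTree ι → TTree ι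

namespace TTree

def eval {ι : Type} : TTree ι → (ι → Option Bool) → Option Bool
  | .leaf b, _ => b
  | .node i t0 tu t1, x =>
    match x i with
    | some false => eval t0 x
    | none => eval tu x
    | some true => eval t1 x

def depth {ι : Type} : TTree ι → ℕ
  | .leaf _ => 0
  | .node _ t0 tu t1 => max (max t0.depth tu.depth) t1.depth + 1

/-- Size of a tree: its number of leaves. -/
def size {ι : Type} : TTree ι → ℕ
  | .leaf _ => 1
  | .node _ t0 tu t1 => t0.size + tu.size + t1.size

end TTree

/-- Boolean decision trees. -/
inductive BTree (ι : Type) : Type where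
  | leaf : Bool → BTree ι
  | node : ι → BTree ι → BTree ι → BTree ι

namespace BTree

def eval {ι : Type} : BTree ι → (ι → Bool) → Bool
  | .leaf b, _ => b
  | .node i t0 t1, x => if x i then eval t1 x else eval t0 x

def depth {ι : Type} : BTree ι → ℕ
  | .leaf _ => 0
  | .node _ t0 t1 => max t0.depth t1.depth + 1

/-- Size of a tree: its number of leaves. -/
def size {ι : Type} : BTree ι → ℕ
  | .leaf _ => 1
  | .node _ t0 t1 => t0.size + t1.size

end BTree

/-- Deterministic u-query complexity: minimal depth of a ternary decision tree
computing the hazard-free extension of `f`. -/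
noncomputable def Du {ι : Type} (f : (ι → Bool) → Bool) : ℕ :=
  sInf {d | ∃ T : TTree ι, (∀ x, T.eval x = hfext f x) ∧ T.depth = d}

/-- Minimal number of leaves of a ternary decision tree computing the
hazard-free extension of `f`. -/
noncomputable def sizeU {ι : Type} (f : (ι → Bool) → Bool) : ℕ :=
  sInf {s | ∃ T : TTree ι, (∀ x, T.eval x = hfext f x) ∧ T.size = s}

/-- Deterministic (Boolean) query complexity of `f`. -/
noncomputable def Dbool {ι : Type} (f : (ι → Bool) → Bool) : ℕ :=
  sInf {d | ∃ T : BTree ι, (∀ x, T.eval x = f x) ∧ T.depth = d}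

/-- Minimal number of leaves of a Boolean decision tree computing `f`. -/
noncomputable def sizeBool {ι : Type} (f : (ι → Bool) → Bool) : ℕ :=
  sInf {s | ∃ T : BTree ι, (∀ x, T.eval x = f x) ∧ T.size = s}

/-- Index type for `MUX_n`: `n` selector bits and `2^n` data bits. -/
abbrev MUXIdx (n : ℕ) := Fin n ⊕ (Fin n → Bool)

/-- The multiplexer function: output the data bit addressed by the selector bits. -/
def MUX (n : ℕ) (z : MUXIdx n → Bool) : Bool :=
  z (Sum.inr fun i => z (Sum.inl i))

section Helpers

variable {ι : Type}

lemma res0_mem (x : ι → Option Bool) : (fun i => (x i).getD false) ∈ Res x := by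
  intro i b h
  simp [h]

lemma hfext_eq_true_iff (f : (ι → Bool) → Bool) (x : ι → Option Bool) :
    hfext f x = some true ↔ ∀ y ∈ Res x, f y = true := by
  unfold hfext
  split_ifs with h1 h2 <;> simp_all

lemma hfext_eq_false_iff (f : (ι → Bool) → Bool) (x : ι → Option Bool) :
    hfext f x = some false ↔ ∀ y ∈ Res x, f y = false := by
  unfold hfext
  split_ifs with h1 h2
  · constructor
    · intro h; exact absurd h (by simp)
    · intro h
      have ht := h1 _ (res0_mem x)
      have hf := h _ (res0_mem x)
      rw [ht] at hf; exact absurd hf (by simp)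
  · simp_all
  · constructor
    · intro h; exact absurd h (by simp)
    · intro h; exact absurd h h2

lemma hfext_eq_none_iff (f : (ι → Bool) → Bool) (x : ι → Option Bool) :
    hfext f x = none ↔ (∃ y ∈ Res x, f y = true) ∧ (∃ y ∈ Res x, f y = false) := by
  unfold hfext
  split_ifs with h1 h2
  · constructor
    · intro h; exact absurd h (by simp)
    · rintro ⟨_, y, hy, hf⟩
      rw [h1 y hy] at hf; exact absurd hf (by simp)
  · constructor
    · intro h; exact absurd h (by simp)
    · rintro ⟨⟨y, hy, hf⟩, _⟩
      rw [h2 y hy] at hf; exact absurd hf (by simp)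
  · constructor
    · intro _
      push_neg at h1 h2
      obtain ⟨y, hy, hfy⟩ := h1
      obtain ⟨z, hz, hfz⟩ := h2
      exact ⟨⟨z, hz, by simpa using hfz⟩, ⟨y, hy, by simpa using hfy⟩⟩
    · intro _; rfl

lemma sub_size_lt [Fintype ι] {q' q : ι → Option Bool} (hs : SubAsn q' q) (hne : q' ≠ q) :
    asnSize q' < asnSize q := by
  obtain ⟨i, hi⟩ := Function.ne_iff.1 hne
  have hi' : q' i = none := by
    cases h : q' i with
    | none => rfl
    | some b => exact absurd (hs i b h) (fun hq => hi (h.trans hq.symm))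
  have hqi : q i ≠ none := by
    intro h; rw [hi', h] at hi; exact hi rfl
  apply Finset.card_lt_card
  constructor
  · intro j hj
    simp only [Finset.mem_filter, Finset.mem_univ, true_and] at hj ⊢
    cases h : q' j with
    | none => exact absurd h hj
    | some b => rw [hs j b h]; simp
  · intro hsub
    have := hsub (by simp [hqi] : i ∈ Finset.univ.filter fun j => q j ≠ none)
    simp [hi'] at this

lemma exists_prime_implicant_sub_aux [Fintype ι] (f : (ι → Bool) → Bool) :
    ∀ (m : ℕ) (q : ι → Option Bool), asnSize q ≤ m → IsImplicant f q →
      ∃ p, SubAsn p q ∧ IsPrimeImplicant f p := by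
  intro m
  induction m with
  | zero =>
    intro q hq himp
    refine ⟨q, fun _ _ h => h, himp, fun q' hs hne _ => ?_⟩
    have := sub_size_lt hs hne
    omega
  | succ m ih =>
    intro q hq himp
    by_cases hp : ∀ q', SubAsn q' q → q' ≠ q → ¬ IsImplicant f q'
    · exact ⟨q, fun _ _ h => h, himp, hp⟩
    · push_neg at hp
      obtain ⟨q', hs, hne, himp'⟩ := hp
      have hlt := sub_size_lt hs hne
      obtain ⟨p, hps, hpp⟩ := ih q' (by omega) himp'
      exact ⟨p, fun i b h => hs i b (hps i b h), hpp⟩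

lemma exists_prime_implicant_sub [Fintype ι] (f : (ι → Bool) → Bool)
    (q : ι → Option Bool) (h : IsImplicant f q) :
    ∃ p, SubAsn p q ∧ IsPrimeImplicant f p :=
  exists_prime_implicant_sub_aux f (asnSize q) q le_rfl h

lemma implicate_iff (f : (ι → Bool) → Bool) (q : ι → Option Bool) :
    IsImplicate f q ↔ IsImplicant (fun y => !f y) q := by
  unfold IsImplicate IsImplicant
  simp [Bool.not_eq_true']

lemma prime_implicate_iff (f : (ι → Bool) → Bool) (q : ι → Option Bool) :
    IsPrimeImplicate f q ↔ IsPrimeImplicant (fun y => !f y) q := by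
  unfold IsPrimeImplicate IsPrimeImplicant
  simp only [implicate_iff]

lemma exists_prime_implicate_sub [Fintype ι] (f : (ι → Bool) → Bool)
    (q : ι → Option Bool) (h : IsImplicate f q) :
    ∃ p, SubAsn p q ∧ IsPrimeImplicate f p := by
  obtain ⟨p, hs, hp⟩ := exists_prime_implicant_sub (fun y => !f y) q ((implicate_iff f q).1 h)
  exact ⟨p, hs, (prime_implicate_iff f p).2 hp⟩

lemma full_cert [Fintype ι] (f : (ι → Bool) → Bool) (x : ι → Option Bool) :
    IsCert f x (fun i => some (x i)) := by
  refine ⟨fun i v h => by injection h, fun y hy => ?_⟩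
  have : y = x := funext fun i => hy i (x i) rfl
  rw [this]

lemma filter_card_irrel {α : Type} [Fintype α] (p : α → Prop) (h1 h2 : DecidablePred p) :
    (@Finset.filter α p h1 Finset.univ).card = (@Finset.filter α p h2 Finset.univ).card := by
  rw [Finset.filter_congr_decidable, Finset.filter_congr_decidable]

end Helpers

set_option maxHeartbeats 2000000 in
/-- Theorem 3.2 (sensitivity theorem, combinatorial part): for a non-constant
Boolean function `f` with largest prime implicant size `k1` and largest prime
implicate size `k2`, `max k1 k2 ≤ s_u(f) ≤ bs_u(f) ≤ cc_u(f) ≤ k1 + k2 - 1`. -/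
theorem stmt0 {n : ℕ} (f : (Fin n → Bool) → Bool)
    (hnc : ∃ y z : Fin n → Bool, f y ≠ f z)
    (k1 k2 : ℕ)
    (hk1ex : ∃ P : Fin n → Option Bool, IsPrimeImplicant f P ∧ asnSize P = k1)
    (hk1max : ∀ P : Fin n → Option Bool, IsPrimeImplicant f P → asnSize P ≤ k1)
    (hk2ex : ∃ Q : Fin n → Option Bool, IsPrimeImplicate f Q ∧ asnSize Q = k2)
    (hk2max : ∀ Q : Fin n → Option Bool, IsPrimeImplicate f Q → asnSize Q ≤ k2) :
    max k1 k2 ≤ sensU f ∧ sensU f ≤ bsU f ∧ bsU f ≤ ccU f ∧ ccU f ≤ k1 + k2 - 1 := by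
  obtain ⟨yw, zw, hwne⟩ := hnc
  -- positivity of k1 and k2
  have hk1pos : 1 ≤ k1 := by
    by_contra h
    obtain ⟨P, hP, hsz⟩ := hk1ex
    have hz : asnSize P = 0 := by omega
    have hall : ∀ i, P i = none := by
      intro i
      by_contra hi
      have : i ∈ Finset.univ.filter fun j => P j ≠ none := by simp [hi]
      have := Finset.card_pos.2 ⟨i, this⟩
      unfold asnSize at hz; omega
    have h1 := hP.1 yw (fun i b hb => by rw [hall i] at hb; exact absurd hb (by simp))
    have h2 := hP.1 zw (fun i b hb => by rw [hall i] at hb; exact absurd hb (by simp))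
    exact hwne (h1.trans h2.symm)
  have hk2pos : 1 ≤ k2 := by
    by_contra h
    obtain ⟨Q, hQ, hsz⟩ := hk2ex
    have hz : asnSize Q = 0 := by omega
    have hall : ∀ i, Q i = none := by
      intro i
      by_contra hi
      have : i ∈ Finset.univ.filter fun j => Q j ≠ none := by simp [hi]
      have := Finset.card_pos.2 ⟨i, this⟩
      unfold asnSize at hz; omega
    have h1 := hQ.1 yw (fun i b hb => by rw [hall i] at hb; exact absurd hb (by simp))
    have h2 := hQ.1 zw (fun i b hb => by rw [hall i] at hb; exact absurd hb (by simp))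
    exact hwne (by rw [h1, h2])
  -- Part 1a : k1 ≤ sensU f
  have h1a : k1 ≤ sensU f := by
    obtain ⟨P, ⟨hPi, hPp⟩, hsz⟩ := hk1ex
    have hx : hfext f P = some true :=
      (hfext_eq_true_iff f P).2 (fun y hy => hPi y hy)
    have hsub : (Finset.univ.filter fun i => P i ≠ none) ⊆
        (Finset.univ.filter fun i : Fin n => ∃ y : Fin n → Option Bool,
          y i ≠ P i ∧ (∀ j, j ≠ i → y j = P j) ∧ hfext f y ≠ hfext f P) := by
      intro i hi
      simp only [Finset.mem_filter, Finset.mem_univ, true_and] at hi ⊢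
      refine ⟨Function.update P i none, by simp [Ne.symm hi],
        fun j hj => Function.update_of_ne hj _ _, ?_⟩
      rw [hx]
      intro heq
      have himp' : IsImplicant f (Function.update P i none) := by
        intro y hy
        exact (hfext_eq_true_iff f _).1 heq y hy
      refine hPp (Function.update P i none) ?_ ?_ himp'
      · intro j b hb
        by_cases hji : j = i
        · subst hji; simp at hb
        · rwa [Function.update_of_ne hji] at hb
      · intro heq'
        have := congrFun heq' i
        simp at this
        exact hi this.symm
    calc k1 = (Finset.univ.filter fun i => P i ≠ none).card := hsz.symm
      _ ≤ _ := Finset.card_le_card hsub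
      _ = sensAt f P := by
            unfold sensAt
            exact filter_card_irrel _ _ _
      _ ≤ sensU f := Finset.le_sup (Finset.mem_univ P)
  -- Part 1b : k2 ≤ sensU f
  have h1b : k2 ≤ sensU f := by
    obtain ⟨Q, ⟨hQi, hQp⟩, hsz⟩ := hk2ex
    have hx : hfext f Q = some false :=
      (hfext_eq_false_iff f Q).2 (fun y hy => hQi y hy)
    have hsub : (Finset.univ.filter fun i => Q i ≠ none) ⊆
        (Finset.univ.filter fun i : Fin n => ∃ y : Fin n → Option Bool,
          y i ≠ Q i ∧ (∀ j, j ≠ i → y j = Q j) ∧ hfext f y ≠ hfext f Q) := by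
      intro i hi
      simp only [Finset.mem_filter, Finset.mem_univ, true_and] at hi ⊢
      refine ⟨Function.update Q i none, by simp [Ne.symm hi],
        fun j hj => Function.update_of_ne hj _ _, ?_⟩
      rw [hx]
      intro heq
      have himp' : IsImplicate f (Function.update Q i none) := by
        intro y hy
        exact (hfext_eq_false_iff f _).1 heq y hy
      refine hQp (Function.update Q i none) ?_ ?_ himp'
      · intro j b hb
        by_cases hji : j = i
        · subst hji; simp at hb
        · rwa [Function.update_of_ne hji] at hb
      · intro heq'
        have := congrFun heq' i
        simp at this
        exact hi this.symm
    calc k2 = (Finset.univ.filter fun i => Q i ≠ none).card := hsz.symm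
      _ ≤ _ := Finset.card_le_card hsub
      _ = sensAt f Q := by
            unfold sensAt
            exact filter_card_irrel _ _ _
      _ ≤ sensU f := Finset.le_sup (Finset.mem_univ Q)
  -- boundedness of the block-sensitivity set
  have hbdd : BddAbove {k | ∃ x, HasSensBlocks f x k} := by
    refine ⟨n, fun k hk => ?_⟩
    obtain ⟨x, B, y, hdisj, hBy⟩ := hk
    have hne : ∀ j : Fin k, ∃ i, i ∈ B j := by
      intro j
      have h := (hBy j).2
      have hne' : y j ≠ x := fun he => h (by rw [he])
      obtain ⟨i, hi⟩ := Function.ne_iff.1 hne'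
      exact ⟨i, ((hBy j).1 i).1 hi⟩
    choose c hc using hne
    have hinj : Function.Injective c := by
      intro j j' h
      by_contra hne'
      exact Set.disjoint_left.1 (hdisj j j' hne') (hc j) (h ▸ hc j')
    simpa using Fintype.card_le_of_injective c hinj
  -- Part 2 : sensU f ≤ bsU f
  have h2 : sensU f ≤ bsU f := by
    apply Finset.sup_le
    intro x _
    set S := Finset.univ.filter fun i : Fin n => ∃ y : Fin n → Option Bool,
        y i ≠ x i ∧ (∀ j, j ≠ i → y j = x j) ∧ hfext f y ≠ hfext f x with hS
    have hfe : sensAt f x = S.card := by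
      unfold sensAt; rw [hS]
      exact filter_card_irrel _ _ _
    have hblocks : HasSensBlocks f x S.card := by
      have hprop : ∀ j : Fin S.card, ∃ y : Fin n → Option Bool,
          y ((S.equivFin.symm j : S) : Fin n) ≠ x ((S.equivFin.symm j : S) : Fin n) ∧
          (∀ j', j' ≠ ((S.equivFin.symm j : S) : Fin n) → y j' = x j') ∧
          hfext f y ≠ hfext f x := by
        intro j
        have hm := Finset.mem_filter.1 (S.equivFin.symm j).2
        exact hm.2
      choose Y hY1 hY2 hY3 using hprop
      refine ⟨fun j => {((S.equivFin.symm j : S) : Fin n)}, Y, ?_, ?_⟩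
      · intro j j' hne'
        rw [Set.disjoint_singleton]
        intro h
        exact hne' (S.equivFin.symm.injective (Subtype.ext h))
      · intro j
        refine ⟨fun i => ?_, hY3 j⟩
        constructor
        · intro hne'
          by_contra h
          have hii : i ≠ ((S.equivFin.symm j : S) : Fin n) := by
            simpa [Set.mem_singleton_iff] using h
          exact hne' (hY2 j i hii)
        · intro h
          have : i = ((S.equivFin.symm j : S) : Fin n) := by
            simpa [Set.mem_singleton_iff] using h
          rw [this]; exact hY1 j
    rw [hfe]
    exact le_csSup hbdd ⟨x, hblocks⟩
  -- Part 3 : bsU f ≤ ccU f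
  have h3 : bsU f ≤ ccU f := by
    unfold bsU
    apply csSup_le
    · have h0 : HasSensBlocks f (fun _ => none) 0 :=
        ⟨Fin.elim0, Fin.elim0, fun j _ _ => j.elim0, fun j => j.elim0⟩
      exact ⟨0, ⟨_, h0⟩⟩
    · rintro k ⟨x, B, y, hdisj, hBy⟩
      have hx : k ≤ ccAt f x := by
        unfold ccAt
        refine le_csInf ⟨certSize (fun i => some (x i)), ⟨_, full_cert f x, rfl⟩⟩ ?_
        rintro m ⟨p, ⟨hxp, hcert⟩, rfl⟩
        have hhit : ∀ j : Fin k, ∃ i, i ∈ B j ∧ p i ≠ none := by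
          intro j
          by_contra h
          push_neg at h
          have hcons : Consistent (y j) p := by
            intro i v hv
            have hib : i ∉ B j := fun hib => absurd hv (by rw [h i hib]; simp)
            have hyx : y j i = x i := by
              by_contra hne'
              exact hib (((hBy j).1 i).1 hne')
            rw [hyx]; exact hxp i v hv
          exact (hBy j).2 (hcert (y j) hcons)
        choose c hc1 hc2 using hhit
        have hinj : Function.Injective c := by
          intro j j' h
          by_contra hne'
          exact Set.disjoint_left.1 (hdisj j j' hne') (hc1 j) (h ▸ hc1 j')
        calc k = (Finset.univ : Finset (Fin k)).card := by simp
          _ ≤ (Finset.univ.filter fun i : Fin n => p i ≠ none).card :=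
            Finset.card_le_card_of_injOn c (fun j _ => by simp [hc2 j]) hinj.injOn
      exact hx.trans (Finset.le_sup (Finset.mem_univ x))
  -- Part 4 : ccU f ≤ k1 + k2 - 1
  have h4 : ccU f ≤ k1 + k2 - 1 := by
    apply Finset.sup_le
    intro x _
    suffices h : ∃ p, IsCert f x p ∧ certSize p ≤ k1 + k2 - 1 by
      obtain ⟨p, hp, hsz⟩ := h
      exact le_trans (Nat.sInf_le ⟨p, hp, rfl⟩) hsz
    match hx : hfext f x with
    | some true =>
      have himp : IsImplicant f x := fun y hy => (hfext_eq_true_iff f x).1 hx y hy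
      obtain ⟨P, hPsub, hPp⟩ := exists_prime_implicant_sub f x himp
      refine ⟨fun i => (P i).map some, ⟨?_, ?_⟩, ?_⟩
      · intro i v hv
        obtain ⟨b, hb, hbv⟩ := Option.map_eq_some_iff.1 hv
        rw [← hbv]; exact hPsub i b hb
      · intro y hy
        rw [hx]
        apply (hfext_eq_true_iff f y).2
        intro z hz
        apply hPp.1 z
        intro i b hb
        exact hz i b (hy i (some b) (by simp [hb]))
      · have heq : certSize (fun i => (P i).map some) = asnSize P := by
          unfold certSize asnSize
          congr 1
          apply Finset.filter_congr
          intro i _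
          simp
        rw [heq]
        have := hk1max P hPp
        omega
    | some false =>
      have himp : IsImplicate f x := fun y hy => (hfext_eq_false_iff f x).1 hx y hy
      obtain ⟨Q, hQsub, hQp⟩ := exists_prime_implicate_sub f x himp
      refine ⟨fun i => (Q i).map some, ⟨?_, ?_⟩, ?_⟩
      · intro i v hv
        obtain ⟨b, hb, hbv⟩ := Option.map_eq_some_iff.1 hv
        rw [← hbv]; exact hQsub i b hb
      · intro y hy
        rw [hx]
        apply (hfext_eq_false_iff f y).2
        intro z hz
        apply hQp.1 z
        intro i b hb
        exact hz i b (hy i (some b) (by simp [hb]))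
      · have heq : certSize (fun i => (Q i).map some) = asnSize Q := by
          unfold certSize asnSize
          congr 1
          apply Finset.filter_congr
          intro i _
          simp
        rw [heq]
        have := hk2max Q hQp
        omega
    | none =>
      obtain ⟨⟨y1, hy1r, hy1⟩, ⟨y0, hy0r, hy0⟩⟩ := (hfext_eq_none_iff f x).1 hx
      have himp1 : IsImplicant f (fun i => some (y1 i)) := by
        intro z hz
        have : z = y1 := funext fun i => hz i (y1 i) rfl
        rw [this]; exact hy1
      have himp0 : IsImplicate f (fun i => some (y0 i)) := by
        intro z hz
        have : z = y0 := funext fun i => hz i (y0 i) rfl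
        rw [this]; exact hy0
      obtain ⟨P, hPsub, hPp⟩ := exists_prime_implicant_sub f _ himp1
      obtain ⟨Q, hQsub, hQp⟩ := exists_prime_implicate_sub f _ himp0
      have hconf : ∃ i, P i ≠ none ∧ Q i ≠ none := by
        by_contra h
        push_neg at h
        set z : Fin n → Bool := fun i =>
          match P i with
          | some b => b
          | none => (Q i).getD false with hzdef
        have hzP : f z = true := by
          apply hPp.1 z
          intro i b hb
          simp [hzdef, hb]
        have hzQ : f z = false := by
          apply hQp.1 z
          intro i b hb
          have hPnone : P i = none := by
            by_contra hPi
            exact absurd hb (by rw [h i hPi]; simp)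
          simp [hzdef, hPnone, hb]
        rw [hzP] at hzQ; exact absurd hzQ (by simp)
      obtain ⟨i0, hi0P, hi0Q⟩ := hconf
      refine ⟨fun i => if P i ≠ none ∨ Q i ≠ none then some (x i) else none, ⟨?_, ?_⟩, ?_⟩
      · intro i v hv
        dsimp only at hv
        by_cases hc : P i ≠ none ∨ Q i ≠ none
        · rw [if_pos hc] at hv
          exact Option.some.inj hv
        · rw [if_neg hc] at hv
          exact absurd hv (by simp)
      · intro y hy
        rw [hx]
        apply (hfext_eq_none_iff f y).2
        have hagree : ∀ i, (P i ≠ none ∨ Q i ≠ none) → y i = x i := by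
          intro i hc
          exact hy i (x i) (by simp only [if_pos hc])
        constructor
        · refine ⟨fun i => match P i with | some b => b | none => (y i).getD false, ?_, ?_⟩
          · intro i c hcx
            cases hP : P i with
            | none => simp [hP, hcx]
            | some b =>
              have hyx : y i = x i := hagree i (Or.inl (by simp [hP]))
              have hb : y1 i = b := by
                have := hPsub i b hP
                injection this
              have hxc : x i = some c := by rw [← hyx]; exact hcx
              have hc1 : y1 i = c := hy1r i c hxc
              simp [hP, ← hb, hc1]
          · apply hPp.1
            intro i b hb
            simp [hb]
        · refine ⟨fun i => match Q i with | some b => b | none => (y i).getD false, ?_, ?_⟩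
          · intro i c hcx
            cases hQ : Q i with
            | none => simp [hQ, hcx]
            | some b =>
              have hyx : y i = x i := hagree i (Or.inr (by simp [hQ]))
              have hb : y0 i = b := by
                have := hQsub i b hQ
                injection this
              have hxc : x i = some c := by rw [← hyx]; exact hcx
              have hc1 : y0 i = c := hy0r i c hxc
              simp [hQ, ← hb, hc1]
          · apply hQp.1
            intro i b hb
            simp [hb]
      · have hsplit : (Finset.univ.filter fun i : Fin n =>
            (if P i ≠ none ∨ Q i ≠ none then some (x i) else none) ≠ none) =
            (Finset.univ.filter fun i => P i ≠ none) ∪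
            (Finset.univ.filter fun i => Q i ≠ none) := by
          ext i
          simp only [Finset.mem_filter, Finset.mem_union, Finset.mem_univ, true_and]
          by_cases h : P i ≠ none ∨ Q i ≠ none <;> simp [h]
        show (Finset.univ.filter fun i : Fin n =>
            (if P i ≠ none ∨ Q i ≠ none then some (x i) else none) ≠ none).card ≤ k1 + k2 - 1
        rw [hsplit]
        have hcard := Finset.card_union_add_card_inter
          (Finset.univ.filter fun i => P i ≠ none)
          (Finset.univ.filter fun i => Q i ≠ none)
        have hA := hk1max P hPp
        have hB := hk2max Q hQp
        have hint : 0 < ((Finset.univ.filter fun i => P i ≠ none) ∩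
            (Finset.univ.filter fun i => Q i ≠ none)).card :=
          Finset.card_pos.2 ⟨i0, by simp [hi0P, hi0Q]⟩
        unfold asnSize at hA hB
        omega
  exact ⟨max_le h1a h1b, h2, h3, h4⟩
end

section
/- Let f : {0,1}^n → {0,1}, let b ∈ {0,1}, and let x ∈ {0,u,1}^n with f̃(x) = b. If c ∈ {0,1,u,*}^n is a certificate for f̃ at x that is minimal (no certificate for f̃ at x is obtained by replacing a non-* entry of c with *), then c_i ≠ u for every i in the domain of c. -/
attribute [local instance 0] Classical.propDecidable

lemma res_nonempty {ι : Type} (x : ι → Option Bool) : (Res x).Nonempty :=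
  ⟨fun j => (x j).getD false, fun i b h => by simp [h]⟩

lemma hfext_eq_some_iff {ι : Type} (f : (ι → Bool) → Bool) (x : ι → Option Bool)
    (b : Bool) : hfext f x = some b ↔ ∀ z ∈ Res x, f z = b := by
  obtain ⟨z₀, hz₀⟩ := res_nonempty x
  unfold hfext
  split_ifs with h1 h2
  · constructor
    · rintro h z hz; cases b
      · simp at h
      · exact h1 z hz
    · intro h; cases b
      · exact absurd ((h1 z₀ hz₀).symm.trans (h z₀ hz₀)) (by simp)
      · rfl
  · constructor
    · rintro h z hz; cases b
      · exact h2 z hz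
      · simp at h
    · intro h; cases b
      · rfl
      · exact absurd h h1
  · constructor
    · rintro ⟨⟩
    · intro h; cases b
      · exact absurd h h2
      · exact absurd h h1

/-- A minimal certificate of the hazard-free extension at an input with stable
value `b` contains no `u` entries. -/
theorem stmt2 {n : ℕ} (f : (Fin n → Bool) → Bool) (b : Bool)
    (x : Fin n → Option Bool) (hx : hfext f x = some b)
    (c : Fin n → Option (Option Bool)) (hc : IsCert f x c)
    (hmin : ∀ i, c i ≠ none → ¬ IsCert f x (Function.update c i none)) :
    ∀ i, c i ≠ some none := by
  intro i hci
  apply hmin i (by rw [hci]; simp)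
  constructor
  · intro j v hj
    by_cases hji : j = i
    · subst hji; simp [Function.update] at hj
    · exact hc.1 j v (by simpa [Function.update, hji] using hj)
  · intro y hy
    rw [hx]
    set y' : Fin n → Option Bool := Function.update y i none with hy'
    have hy'c : Consistent y' c := by
      intro j v hj
      by_cases hji : j = i
      · subst hji; rw [hci] at hj
        simp_all [Function.update]
      · simp only [hy', Function.update, hji, dif_neg, if_neg]
        exact hy j v (by simpa [Function.update, hji] using hj)
    have h1 : hfext f y' = some b := by rw [hc.2 y' hy'c, hx]
    rw [hfext_eq_some_iff] at h1 ⊢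
    intro z hz
    apply h1
    intro j v hj
    by_cases hji : j = i
    · subst hji; simp [hy', Function.update] at hj
    · exact hz j v (by simpa [hy', Function.update, hji] using hj)
end

section
/- Let f : {0,1}^n → {0,1} be non-constant. Then s_u^(u)(f) ≤ 2·s(f) − 1, where s_u^(u)(f) is the maximum of s_u(f,x) over all x ∈ {0,u,1}^n with f̃(x) = u and s(f) is the (Boolean) sensitivity of f. -/
attribute [local instance 0] Classical.propDecidable

section Aux

lemma hfext_forced {ι : Type} {f : (ι → Bool) → Bool} {y : ι → Option Bool} {b : Bool}
    (h : hfext f y = some b) : ∀ z ∈ Res y, f z = b := by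
  unfold hfext at h
  split_ifs at h with h1 h2
  · cases h; exact h1
  · cases h; exact h2

lemma hfext_none' {ι : Type} {f : (ι → Bool) → Bool} {x : ι → Option Bool}
    (h : hfext f x = none) :
    (∃ y ∈ Res x, f y = false) ∧ ∃ y ∈ Res x, f y = true := by
  unfold hfext at h
  split_ifs at h with h1 h2
  push_neg at h1 h2
  obtain ⟨y0, hy0, hy0'⟩ := h1
  obtain ⟨y1, hy1, hy1'⟩ := h2
  exact ⟨⟨y0, hy0, by simpa using hy0'⟩, ⟨y1, hy1, by simpa using hy1'⟩⟩

lemma adj_pair {ι : Type} [Fintype ι] [DecidableEq ι] (f : (ι → Bool) → Bool)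
    (x : ι → Option Bool) :
    ∀ d (y0 y1 : ι → Bool), (Finset.univ.filter fun i => y0 i ≠ y1 i).card = d →
      y0 ∈ Res x → y1 ∈ Res x → f y0 = false → f y1 = true →
      ∃ z ∈ Res x, ∃ k, Function.update z k (!z k) ∈ Res x ∧
        f z = false ∧ f (Function.update z k (!z k)) = true := by
  intro d
  induction d using Nat.strong_induction_on with
  | _ d ih =>
  intro y0 y1 hcard h0 h1 hf0 hf1
  have hne : y0 ≠ y1 := by rintro rfl; rw [hf0] at hf1; exact Bool.false_ne_true hf1
  have hnonempty : (Finset.univ.filter fun i => y0 i ≠ y1 i).Nonempty := by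
    by_contra hemp
    rw [Finset.not_nonempty_iff_eq_empty, Finset.filter_eq_empty_iff] at hemp
    apply hne; funext i
    have := hemp (Finset.mem_univ i)
    simpa using this
  obtain ⟨k, hk⟩ := hnonempty
  have hkne : y0 k ≠ y1 k := (Finset.mem_filter.1 hk).2
  have hupd : Function.update y0 k (y1 k) = Function.update y0 k (!y0 k) := by
    have : y1 k = !y0 k := by cases h0 : y0 k <;> cases h1 : y1 k <;> simp_all
    rw [this]
  set y := Function.update y0 k (y1 k) with hy
  have hymem : y ∈ Res x := by
    intro j b hj
    by_cases hji : j = k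
    · subst hji; simp only [hy, Function.update_self]; exact h1 j b hj
    · simp only [hy, Function.update_of_ne hji]; exact h0 j b hj
  by_cases hfy : f y = true
  · exact ⟨y0, h0, k, by rwa [← hupd], hf0, by rwa [← hupd]⟩
  · have hfy' : f y = false := by simpa using hfy
    have hsub : (Finset.univ.filter fun i => y i ≠ y1 i) ⊂
        (Finset.univ.filter fun i => y0 i ≠ y1 i) := by
      constructor
      · intro i hi
        rw [Finset.mem_filter] at hi ⊢
        refine ⟨Finset.mem_univ i, ?_⟩
        by_cases hik : i = k
        · subst hik; exfalso; apply hi.2; simp [hy]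
        · simpa [hy, Function.update_of_ne hik] using hi.2
      · intro hcon
        have := Finset.mem_filter.1 (hcon hk)
        apply this.2; simp [hy]
    have hlt : (Finset.univ.filter fun i => y i ≠ y1 i).card < d := by
      rw [← hcard]; exact Finset.card_lt_card hsub
    exact ih _ hlt y y1 rfl hymem h1 hfy' hf1

end Aux

set_option maxHeartbeats 1600000 in
theorem stmt5' {n : ℕ} (f : (Fin n → Bool) → Bool)
    (hnc : ∃ y z : Fin n → Bool, f y ≠ f z) :
    sensULevel f none ≤ 2 * boolSens f - 1 := by
  apply Finset.sup_le
  intro x hx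
  rw [Finset.mem_filter] at hx
  have hxnone : hfext f x = none := hx.2
  obtain ⟨⟨y0, hy0, hfy0⟩, ⟨y1, hy1, hfy1⟩⟩ := hfext_none' hxnone
  obtain ⟨z, hz, k, hz2, hfz, hfz2⟩ := adj_pair f x _ y0 y1 rfl hy0 hy1 hfy0 hfy1
  set z' := Function.update z k (!z k) with hz'def
  -- x k = none
  have hxk : x k = none := by
    cases hc : x k with
    | none => rfl
    | some b =>
      have h1 := hz k b hc
      have h2 := hz2 k b hc
      rw [hz'def, Function.update_self, h1] at h2
      simp at h2
  set A := Finset.univ.filter fun i : Fin n => f (Function.update z i (!z i)) ≠ f z with hA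
  set B := Finset.univ.filter fun i : Fin n => f (Function.update z' i (!z' i)) ≠ f z' with hB
  have hkA : k ∈ A := by
    rw [hA, Finset.mem_filter]
    refine ⟨Finset.mem_univ k, ?_⟩
    rw [← hz'def, hfz2, hfz]; simp
  have hz'k : Function.update z' k (!z' k) = z := by
    rw [hz'def]
    simp [Function.update_idem, Function.update_self]
  have hkB : k ∈ B := by
    rw [hB, Finset.mem_filter]
    refine ⟨Finset.mem_univ k, ?_⟩
    rw [hz'k, hfz, hfz2]; simp
  have hScard : sensAt f x ≤ (A ∪ B).card := by
    unfold sensAt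
    apply Finset.card_le_card
    intro i hi
    simp only [Finset.mem_filter] at hi
    obtain ⟨-, y, hyi, hyagree, hyne⟩ := hi
    rw [hxnone] at hyne
    obtain ⟨b, hb⟩ : ∃ b, hfext f y = some b := by
      cases hyv : hfext f y with
      | none => exact absurd hyv hyne
      | some b => exact ⟨b, rfl⟩
    have forced := hfext_forced hb
    have key : ∀ (w : Fin n → Bool), w ∈ Res x → ∀ c, y i = some c →
        Function.update w i c ∈ Res y := by
      intro w hw c hyc j b' hj
      by_cases hji : j = i
      · subst hji
        rw [hyc] at hj
        rw [Function.update_self]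
        exact Option.some.inj hj
      · rw [Function.update_of_ne hji]
        exact hw j b' ((hyagree j hji) ▸ hj)
    have keyRes : ∀ (w : Fin n → Bool), w ∈ Res x → ∀ c, y i = some c →
        w i = c → w ∈ Res y := by
      intro w hw c hyc hwi j b' hj
      by_cases hji : j = i
      · subst hji; rw [hyc] at hj; rw [hwi]; exact Option.some.inj hj
      · exact hw j b' ((hyagree j hji) ▸ hj)
    rw [Finset.mem_union, hA, hB, Finset.mem_filter, Finset.mem_filter]
    cases hxi : x i with
    | none =>
      obtain ⟨c, hyc⟩ : ∃ c, y i = some c := by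
        cases hyv : y i with
        | none => exact absurd (hyv.trans hxi.symm) hyi
        | some c => exact ⟨c, rfl⟩
      cases b with
      | true =>
        left
        refine ⟨Finset.mem_univ i, ?_⟩
        have hzi : z i = !c := by
          cases hzi : z i
          · cases c
            · exfalso
              have := forced z (keyRes z hz false hyc hzi)
              rw [hfz] at this; simp at this
            · rfl
          · cases c
            · rfl
            · exfalso
              have := forced z (keyRes z hz true hyc hzi)
              rw [hfz] at this; simp at this
        have : f (Function.update z i (!z i)) = true := by
          rw [hzi, Bool.not_not]
          exact forced _ (key z hz c hyc)
        rw [this, hfz]; simp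
      | false =>
        right
        refine ⟨Finset.mem_univ i, ?_⟩
        have hzi : z' i = !c := by
          cases hzi : z' i
          · cases c
            · exfalso
              have := forced z' (keyRes z' hz2 false hyc hzi)
              rw [hfz2] at this; simp at this
            · rfl
          · cases c
            · rfl
            · exfalso
              have := forced z' (keyRes z' hz2 true hyc hzi)
              rw [hfz2] at this; simp at this
        have : f (Function.update z' i (!z' i)) = false := by
          rw [hzi, Bool.not_not]
          exact forced _ (key z' hz2 c hyc)
        rw [this, hfz2]; simp
    | some a =>
      have hyic : y i = some (!a) := by
        cases hyv : y i with
        | none =>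
          exfalso
          have hResSub : ∀ w : Fin n → Bool, w ∈ Res x → w ∈ Res y := by
            intro w hw j b' hj
            by_cases hji : j = i
            · subst hji; rw [hyv] at hj; exact absurd hj (by simp)
            · exact hw j b' ((hyagree j hji) ▸ hj)
          have h0 := forced y0 (hResSub y0 hy0)
          have h1 := forced y1 (hResSub y1 hy1)
          rw [hfy0] at h0; rw [hfy1] at h1
          rw [← h0] at h1; exact Bool.false_ne_true h1.symm
        | some c =>
          have hca : c ≠ a := by
            rintro rfl
            exact hyi (hyv.trans hxi.symm)
          cases a <;> cases c <;> simp_all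
      cases b with
      | true =>
        left
        refine ⟨Finset.mem_univ i, ?_⟩
        have hzi : z i = a := hz i a hxi
        have : f (Function.update z i (!z i)) = true := by
          rw [hzi]
          exact forced _ (key z hz (!a) hyic)
        rw [this, hfz]; simp
      | false =>
        right
        refine ⟨Finset.mem_univ i, ?_⟩
        have hzi : z' i = a := hz2 i a hxi
        have : f (Function.update z' i (!z' i)) = false := by
          rw [hzi]
          exact forced _ (key z' hz2 (!a) hyic)
        rw [this, hfz2]; simp
  -- cardinality argument
  have hAcard : A.card ≤ boolSens f := by
    have : A.card = boolSensAt f z := rfl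
    rw [this]
    exact Finset.le_sup (Finset.mem_univ z)
  have hBcard : B.card ≤ boolSens f := by
    have : B.card = boolSensAt f z' := rfl
    rw [this]
    exact Finset.le_sup (Finset.mem_univ z')
  have hinter : 1 ≤ (A ∩ B).card := by
    apply Finset.card_pos.2
    exact ⟨k, Finset.mem_inter.2 ⟨hkA, hkB⟩⟩
  have hunion : (A ∪ B).card + (A ∩ B).card = A.card + B.card :=
    Finset.card_union_add_card_inter A B
  omega

/-- The u-sensitivity over u-inputs is at most `2·s(f) − 1`. -/
theorem stmt5 {n : ℕ} (f : (Fin n → Bool) → Bool)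
    (hnc : ∃ y z : Fin n → Bool, f y ≠ f z) :
    sensULevel f none ≤ 2 * boolSens f - 1 := by
  exact stmt5' f hnc
end

section
/- Let f : {0,1}^n → {0,1} be a monotone Boolean function (x ≤ y coordinatewise implies f(x) ≤ f(y)). Then D(f) ≤ D_u(f) ≤ 2·D(f), where D(f) is the minimum depth of a Boolean decision tree computing f and D_u(f) is the minimum depth of a ternary decision tree computing the hazard-free extension f̃. -/
attribute [local instance 0] Classical.propDecidable

section Aux

variable {ι : Type}

/-- `hfext` on a fully determined input. -/
lemma hfext_some (f : (ι → Bool) → Bool) (x : ι → Bool) :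
    hfext f (fun i => some (x i)) = some (f x) := by
  have hres : ∀ y : ι → Bool, y ∈ Res (fun i => some (x i)) ↔ y = x := by
    intro y
    constructor
    · intro h; funext i; exact h i (x i) rfl
    · rintro rfl i b hb; exact Option.some_injective _ hb
  unfold hfext
  by_cases hfx : f x = true
  · rw [if_pos]
    · simp [hfx]
    · intro y hy; rw [(hres y).1 hy]; exact hfx
  · rw [if_neg, if_pos]
    · simp [Bool.eq_false_iff.2 hfx]
    · intro y hy; rw [(hres y).1 hy]; exact Bool.eq_false_iff.2 hfx
    · intro h; exact hfx (h x ((hres x).2 rfl))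

/-- Convert a ternary tree into a Boolean tree (ignoring the `u` branch). -/
def convB : TTree ι → BTree ι
  | .leaf b => .leaf (b.getD false)
  | .node i t0 _ t1 => .node i (convB t0) (convB t1)

lemma convB_eval (T : TTree ι) (x : ι → Bool) :
    (convB T).eval x = (T.eval (fun i => some (x i))).getD false := by
  induction T with
  | leaf b => rfl
  | node i t0 tu t1 ih0 ihu ih1 =>
      show (if x i then _ else _) = _
      cases hx : x i <;> simp [TTree.eval, hx, ih0, ih1]

lemma convB_depth (T : TTree ι) : (convB T).depth ≤ T.depth := by
  induction T with
  | leaf b => exact le_refl _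
  | node i t0 tu t1 ih0 ihu ih1 =>
      show max _ _ + 1 ≤ max (max _ _) _ + 1
      omega

/-- A full Boolean decision tree for `f`. -/
noncomputable def buildB [DecidableEq ι] (f : (ι → Bool) → Bool) :
    List ι → (ι → Bool) → BTree ι
  | [], σ => .leaf (f σ)
  | i :: l, σ => .node i (buildB f l (Function.update σ i false))
      (buildB f l (Function.update σ i true))

lemma buildB_eval (f : (ι → Bool) → Bool) [DecidableEq ι] :
    ∀ (l : List ι) (σ x : ι → Bool), (∀ j, j ∉ l → σ j = x j) →
      (buildB f l σ).eval x = f x := by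
  intro l
  induction l with
  | nil =>
      intro σ x h
      have : σ = x := funext fun j => h j (by simp)
      simp [buildB, BTree.eval, this]
  | cons i l ih =>
      intro σ x h
      show (if x i = true then (buildB f l (Function.update σ i true)).eval x
        else (buildB f l (Function.update σ i false)).eval x) = f x
      cases hx : x i
      · simp only [Bool.false_eq_true, if_false]
        refine ih _ x ?_
        intro j hj
        rcases eq_or_ne j i with rfl | hji
        · rw [Function.update_self]; exact hx.symm
        · rw [Function.update_of_ne hji]
          exact h j (by simp [hj, hji])
      · simp only [if_pos rfl]
        refine ih _ x ?_
        intro j hj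
        rcases eq_or_ne j i with rfl | hji
        · rw [Function.update_self]; exact hx.symm
        · rw [Function.update_of_ne hji]
          exact h j (by simp [hj, hji])

/-- Simulate a Boolean tree on the all-`u→0` resolution, then continue. -/
def sim0 (k : Bool → TTree ι) : BTree ι → TTree ι
  | .leaf b => k b
  | .node i t0 t1 => .node i (sim0 k t0) (sim0 k t0) (sim0 k t1)

/-- Simulate a Boolean tree on the all-`u→1` resolution, then continue. -/
def sim1 (k : Bool → TTree ι) : BTree ι → TTree ι
  | .leaf b => k b
  | .node i t0 t1 => .node i (sim1 k t0) (sim1 k t1) (sim1 k t1)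

lemma sim0_eval (k : Bool → TTree ι) (t : BTree ι) (x : ι → Option Bool) :
    (sim0 k t).eval x = (k (t.eval (fun i => (x i).getD false))).eval x := by
  induction t with
  | leaf b => rfl
  | node i t0 t1 ih0 ih1 =>
      show (match x i with
        | some false => (sim0 k t0).eval x
        | none => (sim0 k t0).eval x
        | some true => (sim0 k t1).eval x) = _
      rcases hx : x i with _ | b
      · simp [hx, ih0, BTree.eval]
      · cases b <;> simp [hx, ih0, ih1, BTree.eval]

lemma sim1_eval (k : Bool → TTree ι) (t : BTree ι) (x : ι → Option Bool) :
    (sim1 k t).eval x = (k (t.eval (fun i => (x i).getD true))).eval x := by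
  induction t with
  | leaf b => rfl
  | node i t0 t1 ih0 ih1 =>
      show (match x i with
        | some false => (sim1 k t0).eval x
        | none => (sim1 k t1).eval x
        | some true => (sim1 k t1).eval x) = _
      rcases hx : x i with _ | b
      · simp [hx, ih1, BTree.eval]
      · cases b <;> simp [hx, ih0, ih1, BTree.eval]

lemma sim0_depth (k : Bool → TTree ι) (t : BTree ι) :
    (sim0 k t).depth ≤ t.depth + max (k true).depth (k false).depth := by
  induction t with
  | leaf b => cases b <;> simp [sim0, BTree.depth] <;> omega
  | node i t0 t1 ih0 ih1 =>
      show max (max _ _) _ + 1 ≤ (max _ _ + 1) + _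
      omega

lemma sim1_depth (k : Bool → TTree ι) (t : BTree ι) :
    (sim1 k t).depth ≤ t.depth + max (k true).depth (k false).depth := by
  induction t with
  | leaf b => cases b <;> simp [sim1, BTree.depth] <;> omega
  | node i t0 t1 ih0 ih1 =>
      show max (max _ _) _ + 1 ≤ (max _ _ + 1) + _
      omega

/-- Characterization of `hfext` for monotone functions. -/
lemma hfext_mono (f : (ι → Bool) → Bool)
    (hmono : ∀ x y : ι → Bool, (∀ i, x i ≤ y i) → f x ≤ f y)
    (x : ι → Option Bool) :
    hfext f x =
      if f (fun i => (x i).getD false) then some true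
      else if f (fun i => (x i).getD true) then none
      else some false := by
  set lo : ι → Bool := fun i => (x i).getD false with hlo
  set hi : ι → Bool := fun i => (x i).getD true with hhi
  have hloR : lo ∈ Res x := by intro i b hb; simp [hlo, hb]
  have hhiR : hi ∈ Res x := by intro i b hb; simp [hhi, hb]
  have hlole : ∀ y ∈ Res x, ∀ i, lo i ≤ y i := by
    intro y hy i
    rcases hx : x i with _ | b
    · simp [hlo, hx]
    · rw [hlo]; simp only [hx, Option.getD_some]; rw [hy i b hx]
  have hhile : ∀ y ∈ Res x, ∀ i, y i ≤ hi i := by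
    intro y hy i
    rcases hx : x i with _ | b
    · simp [hhi, hx]
    · rw [hhi]; simp only [hx, Option.getD_some]; rw [hy i b hx]
  by_cases h1 : f lo = true
  · have hall : ∀ y ∈ Res x, f y = true := by
      intro y hy
      have := hmono lo y (hlole y hy)
      rw [h1] at this
      exact le_antisymm (Bool.le_true _) this
    rw [hfext, if_pos hall, h1, if_pos rfl]
  · have h1' : f lo = false := Bool.eq_false_iff.2 h1
    have hnot1 : ¬ ∀ y ∈ Res x, f y = true := fun h => h1 (h lo hloR)
    by_cases h2 : f hi = true
    · have hnot0 : ¬ ∀ y ∈ Res x, f y = false := by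
        intro h
        rw [h hi hhiR] at h2
        exact Bool.false_ne_true h2
      rw [hfext, if_neg hnot1, if_neg hnot0, h1', if_neg (by simp), h2,
        if_pos rfl]
    · have h2' : f hi = false := Bool.eq_false_iff.2 h2
      have hall : ∀ y ∈ Res x, f y = false := by
        intro y hy
        have := hmono y hi (hhile y hy)
        rw [h2'] at this
        exact le_antisymm this (Bool.false_le _)
      rw [hfext, if_neg hnot1, if_pos hall, h1', if_neg (by simp), h2',
        if_neg (by simp)]

end Aux

/-- For monotone `f`, `D(f) ≤ D_u(f) ≤ 2·D(f)`. -/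
theorem stmt8 {n : ℕ} (f : (Fin n → Bool) → Bool)
    (hmono : ∀ x y : Fin n → Bool, (∀ i, x i ≤ y i) → f x ≤ f y) :
    Dbool f ≤ Du f ∧ Du f ≤ 2 * Dbool f := by
  classical
  set k1 : Bool → TTree (Fin n) := fun b' =>
    if b' then TTree.leaf none else TTree.leaf (some false) with hk1
  -- the Boolean set is nonempty
  have hBne : {d | ∃ T : BTree (Fin n), (∀ x, T.eval x = f x) ∧ T.depth = d}.Nonempty := by
    refine ⟨_, buildB f (List.finRange n) (fun _ => false), ?_, rfl⟩
    intro x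
    exact buildB_eval f (List.finRange n) _ x
      (fun j hj => absurd (List.mem_finRange j) hj)
  obtain ⟨TB, hTBeval, hTBdepth⟩ := Nat.sInf_mem hBne
  -- the simulation tree computing hfext f with depth ≤ 2 * TB.depth
  set k0 : Bool → TTree (Fin n) := fun b =>
    if b then TTree.leaf (some true) else sim1 k1 TB with hk0
  set T2 : TTree (Fin n) := sim0 k0 TB with hT2
  have hT2eval : ∀ x, T2.eval x = hfext f x := by
    intro x
    rw [hT2, sim0_eval, hfext_mono f hmono x, hTBeval, hk0]
    by_cases h1 : f (fun i => (x i).getD false) = true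
    · simp [h1, TTree.eval]
    · simp only [h1, Bool.false_eq_true, if_false]
      rw [sim1_eval, hTBeval, hk1]
      by_cases h2 : f (fun i => (x i).getD true) = true
      · simp [h2, TTree.eval]
      · simp [h2, TTree.eval]
  have hT2depth : T2.depth ≤ 2 * TB.depth := by
    have h0 := sim0_depth k0 TB
    have h1d := sim1_depth k1 TB
    have hk1t : (k1 true).depth = 0 := rfl
    have hk1f : (k1 false).depth = 0 := rfl
    have hk0t : (k0 true).depth = 0 := rfl
    have hk0f : (k0 false).depth = (sim1 k1 TB).depth := rfl
    rw [hk0t, hk0f] at h0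
    rw [hk1t, hk1f] at h1d
    have hT2d : T2.depth = (sim0 k0 TB).depth := by rw [hT2]
    omega
  -- Du ≤ 2 * Dbool
  have hDu2 : Du f ≤ 2 * Dbool f := by
    have h3 : Du f ≤ T2.depth := Nat.sInf_le ⟨T2, hT2eval, rfl⟩
    have hdb : TB.depth = Dbool f := hTBdepth
    omega
  refine ⟨?_, hDu2⟩
  -- Dbool ≤ Du
  have hTne : {d | ∃ T : TTree (Fin n), (∀ x, T.eval x = hfext f x) ∧ T.depth = d}.Nonempty :=
    ⟨T2.depth, T2, hT2eval, rfl⟩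
  obtain ⟨TT, hTTeval, hTTdepth⟩ := Nat.sInf_mem hTne
  have hconv : ∀ x, (convB TT).eval x = f x := by
    intro x
    rw [convB_eval, hTTeval, hfext_some]
    rfl
  have : Dbool f ≤ (convB TT).depth := Nat.sInf_le ⟨convB TT, hconv, rfl⟩
  have hdd : TT.depth = Du f := hTTdepth
  calc Dbool f ≤ (convB TT).depth := this
    _ ≤ TT.depth := convB_depth TT
    _ = Du f := hdd
end
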